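/- Let g be an aligned history-dependent game with reference static game ĝ, and let P be the asynchronous learning rule built from best response dynamics for every agent. If the all-ones profile 1⃗ is a strict Nash equilibrium of ĝ, then for every initial distribution π and every time t ≥ 1, Pr(s(t;P_π) = 1⃗) ≥ Pr(s(t;P̂_π) = 1⃗); moreover, if π has full support on A, then Pr(s(t;P_π) = 1⃗) > 0 for every t ≥ 1. -/

import Mathlib

open scoped Classical
open Finset

abbrev Profile (n : ℕ) := Fin n → Bool
abbrev UtilProfile (n : ℕ) := Fin n → Profile n → ℝ
abbrev Rule (n : ℕ) := Profile n → Profile n → UtilProfile n → ℝ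

/-- `P` is an individual learning rule for agent `i`: it maps into `[0,1]`, is a
probability measure over next profiles, and only agent `i` may change its action. -/
def IsIndividual {n : ℕ} (i : Fin n) (P : Rule n) : Prop :=
  (∀ (a : Profile n) (U : UtilProfile n), ∑ b : Profile n, P a b U = 1) ∧
  (∀ (a b : Profile n) (U : UtilProfile n), 0 ≤ P a b U ∧ P a b U ≤ 1) ∧
  (∀ (a b : Profile n) (U : UtilProfile n), (∃ j, j ≠ i ∧ a j ≠ b j) → P a b U = 0)

/-- `P` is local: the transition probability only depends on the selected action of `i`
and the pair of payoffs `(U_i(0,a_{-i}), U_i(1,a_{-i}))`. -/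
def IsLocalRule {n : ℕ} (i : Fin n) (P : Rule n) : Prop :=
  ∃ Pbar : Bool → ℝ × ℝ → ℝ,
    ∀ (a : Profile n) (b : Bool) (U : UtilProfile n),
      P a (Function.update a i b) U
        = Pbar b (U i (Function.update a i false), U i (Function.update a i true))

/-- The utility profile obtained from `U` by adding `l` to agent `i`'s utility on
profiles where `i` plays `b`. -/
def bump {n : ℕ} (i : Fin n) (U : UtilProfile n) (b : Bool) (l : ℝ) : UtilProfile n :=
  Function.update U i (fun x => if x i = b then U i x + l else U i x)

/-- `P` is monotone with respect to utility. -/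
def IsMonotoneRule {n : ℕ} (i : Fin n) (P : Rule n) : Prop :=
  ∀ (U : UtilProfile n) (b : Bool) (l : ℝ), 0 ≤ l → ∀ a : Profile n,
    P a (Function.update a i b) U ≤ P a (Function.update a i b) (bump i U b l)

/-- The asynchronous learning rule built from individual learning rules. -/
noncomputable def asyncRule {n : ℕ} (Pvec : Fin n → Rule n) : Rule n :=
  fun a b U => (1 / (n : ℝ)) * ∑ i : Fin n, Pvec i a b U

/-- The best-response set of agent `i` to `a_{-i}` given utilities `U`. -/
noncomputable def BRset {n : ℕ} (i : Fin n) (U : UtilProfile n) (a : Profile n) : Finset Bool :=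
  Finset.univ.filter fun b => ∀ b' : Bool,
    U i (Function.update a i b') ≤ U i (Function.update a i b)

/-- Best response dynamics for agent `i` (ties broken uniformly at random). -/
noncomputable def bestResponse {n : ℕ} (i : Fin n) : Rule n :=
  fun a b U =>
    if ∀ j, j ≠ i → a j = b j then
      (if b i ∈ BRset i U a then (1 : ℝ) else 0) / (BRset i U a).card
    else 0

/-- A finite (nonempty) history of action profiles; `⟨T, α⟩` has length `T+1`. -/
abbrev Hist (n : ℕ) := Σ T : ℕ, (Fin (T + 1) → Profile n)

/-- The last action profile of a history. -/
def lastProf {n : ℕ} (h : Hist n) : Profile n := h.2 (Fin.last h.1)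

/-- `Uh` is an aligned history-dependent game with reference static game `Uhat`. -/
def Aligned {n : ℕ} (Uh : Hist n → UtilProfile n) (Uhat : UtilProfile n) : Prop :=
  ∀ (h : Hist n) (a : Profile n) (i : Fin n),
    (∀ j, j ≠ i → a j ≤ lastProf h j) →
    Uhat i (Function.update a i true) ≤ Uh h i (Function.update (lastProf h) i true) ∧
    Uh h i (Function.update (lastProf h) i false) ≤ Uhat i (Function.update a i false)

/-- The prefix `α^{≤t}` of a path `α` (a history of length `t+1`). -/
def prefixHist {n T : ℕ} (α : Fin (T + 1) → Profile n) (t : Fin T) : Hist n :=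
  ⟨t.1, fun s => α (Fin.castLE (Nat.succ_le_succ t.isLt.le) s)⟩

/-- The path measure of the history-dependent game:
`P_π(α) = π(α¹) ∏_t P^{α^{≤t}}(α^{t+1})`. -/
noncomputable def pathHist {n : ℕ} (P : Rule n) (Uh : Hist n → UtilProfile n)
    (π : Profile n → ℝ) (T : ℕ) (α : Fin (T + 1) → Profile n) : ℝ :=
  π (α 0) * ∏ t : Fin T, P (α t.castSucc) (α t.succ) (Uh (prefixHist α t))

/-- The path measure of the static game:
`P̂_π(α) = π(α¹) ∏_t P̂^{α^t}(α^{t+1})`. -/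
noncomputable def pathStatic {n : ℕ} (P : Rule n) (Uhat : UtilProfile n)
    (π : Profile n → ℝ) (T : ℕ) (α : Fin (T + 1) → Profile n) : ℝ :=
  π (α 0) * ∏ t : Fin T, P (α t.castSucc) (α t.succ) Uhat

/-- `π` is a probability distribution on the set of action profiles. -/
def IsProb {n : ℕ} (π : Profile n → ℝ) : Prop :=
  (∀ a, 0 ≤ π a) ∧ ∑ a : Profile n, π a = 1

/-- The probability that the process governed by the path measure `μ` is at profile `a`
at the final time of paths of length `T+1`. -/
noncomputable def prAt {n : ℕ} (T : ℕ) (μ : (Fin (T + 1) → Profile n) → ℝ)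
    (a : Profile n) : ℝ :=
  ∑ α ∈ Finset.univ.filter (fun α : Fin (T + 1) → Profile n => α (Fin.last T) = a), μ α

/-- `a` is a strict Nash equilibrium of the static game with utilities `U`. -/
def IsStrictNash {n : ℕ} (U : UtilProfile n) (a : Profile n) : Prop :=
  ∀ (i : Fin n) (b : Bool), b ≠ a i → U i (Function.update a i b) < U i a

/-! Couple the history-dependent chain with the static one: at each step both chains let the
same uniformly chosen agent revise, and its two Bernoulli choices are coupled monotonically.
Alignment makes an agent's probability of playing `1` under `U^α` at least its probability
under `Û` at any profile below `α^T`, so the coupling keeps the static profile below the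
history-dependent one; hence whenever the static chain is at `1⃗`, so is its partner.
For positivity, strictness of the equilibrium and alignment make `1⃗` absorbing for the
history-dependent dynamics, so the constant path at `1⃗` has probability `π(1⃗) > 0`. -/

open Function

noncomputable def boolCoupling (p q : ℝ) : Bool → Bool → ℝ
  | true, true => min p q
  | true, false => p - min p q
  | false, true => q - min p q
  | false, false => 1 - max p q

section BoolCoupling

variable {p q : ℝ}

lemma boolCoupling_nonneg (hp₀ : 0 ≤ p) (hp₁ : p ≤ 1) (hq₀ : 0 ≤ q) (hq₁ : q ≤ 1)
    (d s : Bool) : 0 ≤ boolCoupling p q d s := by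
  cases d <;> cases s <;> simp only [boolCoupling, sub_nonneg]
  · exact max_le hp₁ hq₁
  · exact min_le_right p q
  · exact min_le_left p q
  · exact le_min hp₀ hq₀

lemma boolCoupling_comm (d s : Bool) : boolCoupling p q d s = boolCoupling q p s d := by
  cases d <;> cases s <;> simp only [boolCoupling, min_comm, max_comm]

lemma boolCoupling_add_boolCoupling (d : Bool) :
    boolCoupling p q d true + boolCoupling p q d false = if d then p else 1 - p := by
  have := min_add_max p q
  cases d <;> simp only [boolCoupling, Bool.false_eq_true, if_true, if_false] <;> linarith

lemma boolCoupling_false_true (h : q ≤ p) : boolCoupling p q false true = 0 := by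
  simp [boolCoupling, min_eq_right h]

end BoolCoupling

section BinaryRule

variable {n : ℕ}

noncomputable def binaryRule (i : Fin n) (q : UtilProfile n → Profile n → ℝ) : Rule n :=
  fun a b U => if ∀ j, j ≠ i → a j = b j then (if b i then q U a else 1 - q U a) else 0

lemma binaryRule_nonneg {i : Fin n} {q : UtilProfile n → Profile n → ℝ}
    (hq₀ : ∀ U a, 0 ≤ q U a) (hq₁ : ∀ U a, q U a ≤ 1) (a b : Profile n) (U : UtilProfile n) :
    0 ≤ binaryRule i q a b U := by
  unfold binaryRule
  split_ifs <;> linarith [hq₀ U a, hq₁ U a]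

lemma asyncRule_nonneg {P : Fin n → Rule n} (hP : ∀ i a b U, 0 ≤ P i a b U)
    (a b : Profile n) (U : UtilProfile n) : 0 ≤ asyncRule P a b U :=
  mul_nonneg (by positivity) (Finset.sum_nonneg fun i _ => hP i a b U)

lemma asyncRule_binaryRule_top_top {q : Fin n → UtilProfile n → Profile n → ℝ}
    {U : UtilProfile n} (hn : n ≠ 0) (hq : ∀ i, q i U ⊤ = 1) :
    asyncRule (fun i => binaryRule i (q i)) ⊤ ⊤ U = 1 := by
  simp [asyncRule, binaryRule, hq, hn]

lemma sum_ite_forall_ne_eq {i : Fin n} (y : Profile n) (F : Profile n → ℝ) :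
    ∑ y' : Profile n, (if ∀ j, j ≠ i → y j = y' j then F y' else 0)
      = F (update y i true) + F (update y i false) := by
  have hne : update y i true ≠ update y i false := fun h => by simpa using congrFun h i
  rw [Fintype.sum_eq_add _ _ hne fun y' hy' => if_neg fun hmatch => ?_]
  · simp +contextual [update_of_ne, eq_comm]
  · cases hb : y' i
    · exact hy'.2 (funext fun j => by by_cases hj : j = i <;> simp_all [update_of_ne])
    · exact hy'.1 (funext fun j => by by_cases hj : j = i <;> simp_all [update_of_ne])

end BinaryRule

section Coupling

variable {n : ℕ} (q : Fin n → UtilProfile n → Profile n → ℝ)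

noncomputable def coupledStep (U V : UtilProfile n) (x y x' y' : Profile n) : ℝ :=
  (1 / n : ℝ) * ∑ i, if (∀ j, j ≠ i → x j = x' j) ∧ (∀ j, j ≠ i → y j = y' j)
    then boolCoupling (q i U x) (q i V y) (x' i) (y' i) else 0

variable {q}

lemma coupledStep_comm (U V : UtilProfile n) (x y x' y' : Profile n) :
    coupledStep q U V x y x' y' = coupledStep q V U y x y' x' := by
  simp only [coupledStep, and_comm, boolCoupling_comm (p := q _ U x)]

lemma coupledStep_nonneg (hq₀ : ∀ i U a, 0 ≤ q i U a) (hq₁ : ∀ i U a, q i U a ≤ 1)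
    (U V : UtilProfile n) (x y x' y' : Profile n) : 0 ≤ coupledStep q U V x y x' y' := by
  unfold coupledStep
  refine mul_nonneg (by positivity) (Finset.sum_nonneg fun i _ => ?_)
  split_ifs
  exacts [boolCoupling_nonneg (hq₀ ..) (hq₁ ..) (hq₀ ..) (hq₁ ..) _ _, le_rfl]

lemma sum_coupledStep (U V : UtilProfile n) (x y x' : Profile n) :
    ∑ y', coupledStep q U V x y x' y' = asyncRule (fun i => binaryRule i (q i)) x x' U := by
  simp only [coupledStep, asyncRule, binaryRule, ← Finset.mul_sum]
  rw [Finset.sum_comm]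
  congr 1
  refine Finset.sum_congr rfl fun i _ => ?_
  by_cases hx : ∀ j, j ≠ i → x j = x' j
  · simp only [and_iff_right hx, if_pos hx]
    rw [sum_ite_forall_ne_eq y (fun y' => boolCoupling (q i U x) (q i V y) (x' i) (y' i)),
      update_self, update_self, boolCoupling_add_boolCoupling]
  · simp [hx]

lemma le_of_coupledStep_ne_zero {U V : UtilProfile n} {x y x' y' : Profile n}
    (hq : ∀ i, q i V y ≤ q i U x) (hyx : y ≤ x) (hne : coupledStep q U V x y x' y' ≠ 0) :
    y' ≤ x' := by
  obtain ⟨i, -, hi⟩ := Finset.exists_ne_zero_of_sum_ne_zero (right_ne_zero_of_mul hne)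
  obtain ⟨hx, hy⟩ : (∀ j, j ≠ i → x j = x' j) ∧ (∀ j, j ≠ i → y j = y' j) := by
    by_contra h
    exact hi (if_neg h)
  rw [if_pos ⟨hx, hy⟩] at hi
  intro j
  by_cases hj : j = i
  · subst hj
    by_contra hlt
    obtain ⟨hx', hy'⟩ := Bool.lt_iff.1 (not_le.1 hlt)
    rw [hx', hy', boolCoupling_false_true (hq j)] at hi
    exact hi rfl
  · rw [← hx j hj, ← hy j hj]
    exact hyx j

end Coupling

section Paths

variable {n : ℕ}

lemma prefixHist_snoc_castSucc {T : ℕ} (α : Fin (T + 1) → Profile n) (x : Profile n)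
    (t : Fin T) :
    prefixHist (Fin.snoc α x : Fin (T + 2) → Profile n) t.castSucc = prefixHist α t := by
  simp only [prefixHist]
  congr 1
  funext s
  exact Fin.snoc_castSucc (α := fun _ => Profile n) x α (Fin.castLE (by omega) s)

lemma prefixHist_snoc_last {T : ℕ} (α : Fin (T + 1) → Profile n) (x : Profile n) :
    prefixHist (Fin.snoc α x : Fin (T + 2) → Profile n) (Fin.last T) = ⟨T, α⟩ := by
  simp only [prefixHist]
  congr 1
  funext s
  exact Fin.snoc_castSucc (α := fun _ => Profile n) x α (Fin.castLE (by omega) s)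

lemma sum_fun_eq_sum_sum_snoc {X : Type*} [Fintype X] {T : ℕ} (F : (Fin (T + 2) → X) → ℝ) :
    ∑ f, F f = ∑ g : Fin (T + 1) → X, ∑ x, F (Fin.snoc g x) := by
  rw [← (Fin.snocEquiv fun _ => X).sum_comp, Fintype.sum_prod_type, Finset.sum_comm]
  rfl

lemma pathHist_snoc (P : Rule n) (Uh : Hist n → UtilProfile n) (π : Profile n → ℝ) {T : ℕ}
    (α : Fin (T + 1) → Profile n) (x : Profile n) :
    pathHist P Uh π (T + 1) (Fin.snoc α x)
      = pathHist P Uh π T α * P (α (Fin.last T)) x (Uh ⟨T, α⟩) := by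
  simp only [pathHist, Fin.prod_univ_castSucc, prefixHist_snoc_castSucc, prefixHist_snoc_last,
    Fin.succ_castSucc, Fin.succ_last, Fin.snoc_castSucc, Fin.snoc_last, mul_assoc]
  rfl

lemma pathHist_nonneg {P : Rule n} (hP : ∀ a b U, 0 ≤ P a b U) (Uh : Hist n → UtilProfile n)
    {π : Profile n → ℝ} (hπ : ∀ a, 0 ≤ π a) {T : ℕ} (α : Fin (T + 1) → Profile n) :
    0 ≤ pathHist P Uh π T α :=
  mul_nonneg (hπ _) (Finset.prod_nonneg fun _ _ => hP ..)

end Paths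

section CoupledPath

variable {n : ℕ} (q : Fin n → UtilProfile n → Profile n → ℝ)

noncomputable def coupledPath (Uh Vh : Hist n → UtilProfile n) (π : Profile n → ℝ) (T : ℕ)
    (α β : Fin (T + 1) → Profile n) : ℝ :=
  (if α 0 = β 0 then π (α 0) else 0) * ∏ t : Fin T,
    coupledStep q (Uh (prefixHist α t)) (Vh (prefixHist β t))
      (α t.castSucc) (β t.castSucc) (α t.succ) (β t.succ)

variable {q} {Uh Vh : Hist n → UtilProfile n} {π : Profile n → ℝ}

lemma coupledPath_comm {T : ℕ} (α β : Fin (T + 1) → Profile n) :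
    coupledPath q Uh Vh π T α β = coupledPath q Vh Uh π T β α := by
  unfold coupledPath
  congr 1
  · by_cases h : α 0 = β 0 <;> simp [h, eq_comm]
  · exact Finset.prod_congr rfl fun t _ => coupledStep_comm ..

lemma coupledPath_nonneg (hq₀ : ∀ i U a, 0 ≤ q i U a) (hq₁ : ∀ i U a, q i U a ≤ 1)
    (hπ : ∀ a, 0 ≤ π a) {T : ℕ} (α β : Fin (T + 1) → Profile n) :
    0 ≤ coupledPath q Uh Vh π T α β :=
  mul_nonneg (by split_ifs <;> simp [hπ])
    (Finset.prod_nonneg fun _ _ => coupledStep_nonneg hq₀ hq₁ ..)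

lemma coupledPath_snoc {T : ℕ} (α β : Fin (T + 1) → Profile n) (x y : Profile n) :
    coupledPath q Uh Vh π (T + 1) (Fin.snoc α x) (Fin.snoc β y)
      = coupledPath q Uh Vh π T α β *
          coupledStep q (Uh ⟨T, α⟩) (Vh ⟨T, β⟩) (α (Fin.last T)) (β (Fin.last T)) x y := by
  simp only [coupledPath, Fin.prod_univ_castSucc, prefixHist_snoc_castSucc,
    prefixHist_snoc_last, Fin.succ_castSucc, Fin.succ_last, Fin.snoc_castSucc, Fin.snoc_last,
    mul_assoc]
  rfl

lemma sum_coupledPath {T : ℕ} (α : Fin (T + 1) → Profile n) :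
    ∑ β, coupledPath q Uh Vh π T α β
      = pathHist (asyncRule fun i => binaryRule i (q i)) Uh π T α := by
  induction T with
  | zero =>
    rw [← (Equiv.funUnique (Fin 1) (Profile n)).symm.sum_comp]
    simp [coupledPath, pathHist, Finset.sum_ite_eq]
  | succ T ih =>
    rw [← Fin.snoc_init_self α, sum_fun_eq_sum_sum_snoc, pathHist_snoc, ← ih, Finset.sum_mul]
    refine Finset.sum_congr rfl fun β _ => ?_
    simp only [coupledPath_snoc, ← Finset.mul_sum, sum_coupledStep]

lemma le_of_coupledPath_ne_zero
    (hq : ∀ (h₁ h₂ : Hist n) i, lastProf h₂ ≤ lastProf h₁ →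
      q i (Vh h₂) (lastProf h₂) ≤ q i (Uh h₁) (lastProf h₁))
    {T : ℕ} {α β : Fin (T + 1) → Profile n} (hne : coupledPath q Uh Vh π T α β ≠ 0) :
    β (Fin.last T) ≤ α (Fin.last T) := by
  induction T with
  | zero =>
    have h₀ : α 0 = β 0 := by
      by_contra h
      simp [coupledPath, h] at hne
    exact h₀.symm.le
  | succ T ih =>
    rw [← Fin.snoc_init_self α, ← Fin.snoc_init_self β, coupledPath_snoc] at hne
    have hlast := ih (left_ne_zero_of_mul hne)
    simpa using le_of_coupledStep_ne_zero (fun i => hq ⟨T, Fin.init α⟩ ⟨T, Fin.init β⟩ i hlast)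
      hlast (right_ne_zero_of_mul hne)

end CoupledPath

lemma sum_sum_le_of_support {X Y : Type*} [Fintype X] [Fintype Y] {μ : X → Y → ℝ}
    (hμ : ∀ x y, 0 ≤ μ x y) {A : Finset X} {B : Finset Y}
    (hAB : ∀ x y, μ x y ≠ 0 → y ∈ B → x ∈ A) :
    ∑ y ∈ B, ∑ x, μ x y ≤ ∑ x ∈ A, ∑ y, μ x y := by
  calc ∑ y ∈ B, ∑ x, μ x y = ∑ x ∈ A, ∑ y ∈ B, μ x y := by
        rw [Finset.sum_comm, ← Finset.sum_subset (Finset.subset_univ A)]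
        intro x _ hx
        exact Finset.sum_eq_zero fun y hy => by_contra fun h => hx (hAB x y h hy)
    _ ≤ ∑ x ∈ A, ∑ y, μ x y :=
        Finset.sum_le_sum fun x _ => Finset.sum_le_univ_sum_of_nonneg (hμ x)

theorem prAt_pathHist_top_le {n : ℕ} {q : Fin n → UtilProfile n → Profile n → ℝ}
    (hq₀ : ∀ i U a, 0 ≤ q i U a) (hq₁ : ∀ i U a, q i U a ≤ 1) {Uh Vh : Hist n → UtilProfile n}
    (hq : ∀ (h₁ h₂ : Hist n) i, lastProf h₂ ≤ lastProf h₁ →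
      q i (Vh h₂) (lastProf h₂) ≤ q i (Uh h₁) (lastProf h₁))
    {π : Profile n → ℝ} (hπ : ∀ a, 0 ≤ π a) (T : ℕ) :
    prAt T (pathHist (asyncRule fun i => binaryRule i (q i)) Vh π T) ⊤
      ≤ prAt T (pathHist (asyncRule fun i => binaryRule i (q i)) Uh π T) ⊤ := by
  calc prAt T (pathHist _ Vh π T) ⊤
      = ∑ β ∈ {β | β (Fin.last T) = ⊤}, ∑ α, coupledPath q Uh Vh π T α β := by
        simp only [prAt, coupledPath_comm (Uh := Uh), sum_coupledPath]
    _ ≤ ∑ α ∈ {α | α (Fin.last T) = ⊤}, ∑ β, coupledPath q Uh Vh π T α β :=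
        sum_sum_le_of_support (coupledPath_nonneg hq₀ hq₁ hπ) fun α β hne hβ => by
          simp only [Finset.mem_filter, Finset.mem_univ, true_and] at hβ ⊢
          exact top_le_iff.1 (hβ ▸ le_of_coupledPath_ne_zero hq hne)
    _ = prAt T (pathHist _ Uh π T) ⊤ := by simp only [prAt, sum_coupledPath]

section BestResponse

variable {n : ℕ}

noncomputable def brProb (i : Fin n) (U : UtilProfile n) (a : Profile n) : ℝ :=
  if U i (update a i false) < U i (update a i true) then 1
  else if U i (update a i false) = U i (update a i true) then 1 / 2 else 0

lemma brProb_nonneg (i : Fin n) (U : UtilProfile n) (a : Profile n) : 0 ≤ brProb i U a := by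
  unfold brProb; split_ifs <;> norm_num

lemma brProb_le_one (i : Fin n) (U : UtilProfile n) (a : Profile n) : brProb i U a ≤ 1 := by
  unfold brProb; split_ifs <;> norm_num

lemma brProb_mono {i : Fin n} {U V : UtilProfile n} {a b : Profile n}
    (h₀ : V i (update b i false) ≤ U i (update a i false))
    (h₁ : U i (update a i true) ≤ V i (update b i true)) : brProb i U a ≤ brProb i V b := by
  unfold brProb
  split_ifs <;> norm_num <;> grind

lemma BRset_eq (i : Fin n) (U : UtilProfile n) (a : Profile n) :
    BRset i U a = if U i (update a i false) < U i (update a i true) then {true}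
      else if U i (update a i false) = U i (update a i true) then Finset.univ else {false} := by
  ext b
  cases b <;> split_ifs <;> simp [BRset, Bool.forall_bool] <;> grind

lemma bestResponse_eq_binaryRule (i : Fin n) : bestResponse i = binaryRule i (brProb i) := by
  funext a b U
  simp only [bestResponse, binaryRule, BRset_eq, brProb]
  split_ifs <;> cases b i <;> simp_all <;> norm_num

end BestResponse

section Aligned

variable {n : ℕ} {Uh : Hist n → UtilProfile n} {Uhat : UtilProfile n}

lemma brProb_le_of_aligned (hA : Aligned Uh Uhat) (h : Hist n) {a : Profile n}
    (ha : a ≤ lastProf h) (i : Fin n) : brProb i Uhat a ≤ brProb i (Uh h) (lastProf h) :=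
  let ⟨h₁, h₀⟩ := hA h a i fun j _ => ha j
  brProb_mono h₀ h₁

lemma brProb_eq_one_of_aligned (hA : Aligned Uh Uhat) (hNE : IsStrictNash Uhat ⊤)
    (h : Hist n) (hh : lastProf h = ⊤) (i : Fin n) : brProb i (Uh h) ⊤ = 1 := by
  obtain ⟨h₁, h₀⟩ := hA h ⊤ i fun j _ => hh ▸ le_rfl
  rw [hh] at h₀ h₁
  refine if_pos ?_
  calc Uh h i (update ⊤ i false) ≤ Uhat i (update ⊤ i false) := h₀
    _ < Uhat i ⊤ := hNE i false (by simp)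
    _ = Uhat i (update ⊤ i true) := congrArg (Uhat i) (update_eq_self i ⊤).symm
    _ ≤ Uh h i (update ⊤ i true) := h₁

end Aligned

lemma le_prAt {n T : ℕ} {μ : (Fin (T + 1) → Profile n) → ℝ} (hμ : ∀ α, 0 ≤ μ α)
    {α : Fin (T + 1) → Profile n} : μ α ≤ prAt T μ (α (Fin.last T)) :=
  Finset.single_le_sum (fun β _ => hμ β) (by simp)

/-- For an aligned history-dependent game under asynchronous best response dynamics:
if the all-ones profile is a strict Nash equilibrium of the reference static game,
then the history-dependent probability of the all-ones profile dominates the static one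
at every time; if moreover `π` has full support, it is positive at every time. -/
theorem br_dominance_and_positivity (n : ℕ) (hn : 1 ≤ n)
    (Uh : Hist n → UtilProfile n) (Uhat : UtilProfile n) (hA : Aligned Uh Uhat)
    (hNE : IsStrictNash Uhat (fun _ => true))
    (π : Profile n → ℝ) (hπ : IsProb π) :
    (∀ T : ℕ,
      prAt T (pathStatic (asyncRule fun i => bestResponse i) Uhat π T) (fun _ => true)
        ≤ prAt T (pathHist (asyncRule fun i => bestResponse i) Uh π T) (fun _ => true)) ∧
    ((∀ a, 0 < π a) → ∀ T : ℕ,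
      0 < prAt T (pathHist (asyncRule fun i => bestResponse i) Uh π T) (fun _ => true)) := by
  simp only [bestResponse_eq_binaryRule]
  have hbr₀ (i : Fin n) U a : 0 ≤ brProb i U a := brProb_nonneg i U a
  have hbr₁ (i : Fin n) U a : brProb i U a ≤ 1 := brProb_le_one i U a
  -- `pathStatic` is definitionally `pathHist` for the constant game `fun _ => Uhat`.
  refine ⟨fun T => prAt_pathHist_top_le (Vh := fun _ => Uhat) hbr₀ hbr₁
    (fun h₁ _ i hle => brProb_le_of_aligned hA h₁ hle i) hπ.1 T, fun hpos T => ?_⟩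
  have hstay (t : Fin T) : asyncRule (fun i => binaryRule i (brProb i)) ⊤ ⊤
      (Uh (prefixHist (fun _ => ⊤) t)) = 1 :=
    asyncRule_binaryRule_top_top (by omega) (brProb_eq_one_of_aligned hA hNE _ rfl)
  calc 0 < pathHist _ Uh π T fun _ => ⊤ := by
        rw [pathHist, Finset.prod_eq_one fun t _ => hstay t, mul_one]
        exact hpos ⊤
    _ ≤ _ := le_prAt <| pathHist_nonneg
        (asyncRule_nonneg fun i => binaryRule_nonneg (hbr₀ i) (hbr₁ i)) Uh hπ.1
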